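/- Let N ∈ ℕ, let s ∈ ℕ with s < N, let x ∈ I_s ∖ I_{s+1}, and let n ∈ ℕ. Then ∫_{I_N} |D_n(x − t)| dμ(t) ≤ λ M_s / M_N, where λ = sup_k m_k and x − t denotes the group difference in G_m. -/

import Mathlib

open MeasureTheory Filter ENNReal Finset

noncomputable section

/-- The Vilenkin group `G_m`: complete direct product of cyclic groups `ℤ_{m_k}`. -/
abbrev Gm (m : ℕ → ℕ) : Type := ∀ k : ℕ, ZMod (m k)

/-- The generalized powers `M_0 = 1`, `M_{k+1} = m_k M_k`. -/
def Mgen (m : ℕ → ℕ) : ℕ → ℕ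
  | 0 => 1
  | k + 1 => m k * Mgen m k

/-- The digits of `n` in the generalized number system `n = Σ_j n_j M_j`. -/
def digit (m : ℕ → ℕ) (n j : ℕ) : ℕ := (n / Mgen m j) % m j

/-- The generalized Rademacher functions `r_k(x) = exp(2πi x_k / m_k)`. -/
def rade (m : ℕ → ℕ) (k : ℕ) (x : Gm m) : ℂ :=
  Complex.exp (2 * Real.pi * Complex.I * ((x k).val : ℂ) / (m k : ℂ))

/-- The Vilenkin system `ψ_n = Π_k r_k^{n_k}` (all digits `n_k` with `k > n` vanish). -/
def psi (m : ℕ → ℕ) (n : ℕ) (x : Gm m) : ℂ :=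
  ∏ k ∈ Finset.range (n + 1), rade m k x ^ digit m n k

/-- The cylinder `I_n(x) = {y : y_0 = x_0, ..., y_{n-1} = x_{n-1}}`. -/
def cyl (m : ℕ → ℕ) (n : ℕ) (x : Gm m) : Set (Gm m) := {y | ∀ j < n, y j = x j}

/-- Vilenkin–Fourier coefficient of an integrable function. -/
def fcoef (m : ℕ → ℕ) (μ : Measure (Gm m)) (f : Gm m → ℂ) (k : ℕ) : ℂ :=
  ∫ x, f x * (starRingEnd ℂ) (psi m k x) ∂μ

/-- Partial sums of the Vilenkin–Fourier series of a function. -/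
def Spart (m : ℕ → ℕ) (μ : Measure (Gm m)) (f : Gm m → ℂ) (n : ℕ) (x : Gm m) : ℂ :=
  ∑ k ∈ Finset.range n, fcoef m μ f k * psi m k x

/-- The Dirichlet kernels `D_n = Σ_{k<n} ψ_k`. -/
def Dker (m : ℕ → ℕ) (n : ℕ) (x : Gm m) : ℂ :=
  ∑ k ∈ Finset.range n, psi m k x

/-- `f = (f^{(n)})` is a martingale w.r.t. the filtration generated by the cylinders:
each `f^{(n)}` is integrable and, for `n ≤ k`, the conditional expectation of `f^{(k)}`
on the `n`-th σ-algebra (the average on each cylinder `I_n(x)`) equals `f^{(n)}`. -/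
def IsVMartingale (m : ℕ → ℕ) (μ : Measure (Gm m)) (f : ℕ → Gm m → ℂ) : Prop :=
  (∀ n, Integrable (f n) μ) ∧
  ∀ n k : ℕ, n ≤ k → ∀ x : Gm m, f n x = (Mgen m n : ℂ) * ∫ t in cyl m n x, f k t ∂μ

/-- Vilenkin–Fourier coefficient of a martingale: `lim_k ∫ f^{(k)} ψ̄_i dμ`; since the
integral is independent of `k` once `M_k > i`, and `M_{i+1} > i`, we take `k = i+1`. -/
def mfhat (m : ℕ → ℕ) (μ : Measure (Gm m)) (f : ℕ → Gm m → ℂ) (i : ℕ) : ℂ :=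
  ∫ x, f (i + 1) x * (starRingEnd ℂ) (psi m i x) ∂μ

/-- The `H_p` (quasi-)norm of a martingale: `‖sup_n |f^{(n)}|‖_{L^p(μ)}`, as an `ℝ≥0∞`. -/
def HpNorm (m : ℕ → ℕ) (μ : Measure (Gm m)) (p : ℝ) (f : ℕ → Gm m → ℂ) : ℝ≥0∞ :=
  (∫⁻ x, (⨆ n, (‖f n x‖₊ : ℝ≥0∞)) ^ p ∂μ) ^ (1 / p)

/-!
Fix `y ∈ I_s ∖ I_{s+1}`. Since the digits of `c M_j + b` with `b < M_j` are those of `c M_j`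
together with those of `b`, we have `ψ_{c M_j + b} = ψ_{c M_j} ψ_b`. This gives
`D_{c M_j} = (∑_{i<c} ψ_{i M_j}) D_{M_j}`. On `I_s` we have `ψ_{i M_s} = r_s^i`, so
`D_{M_{s+1}}(y)` contains the factor `∑_{i < m_s} r_s(y)^i`. That factor vanishes, because
`r_s(y)` is an `m_s`-th root of unity other than `1`. Hence `D_n(y) = ψ_{q M_{s+1}}(y) D_r(y)`
with `r = n mod M_{s+1}`, so `|D_n(y)| ≤ M_{s+1} ≤ λ M_s`. For `t ∈ I_N` with `s < N`, the
difference `x - t` lies in `I_s ∖ I_{s+1}` again, and `μ(I_N) = 1 / M_N`.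
-/

variable {m : ℕ → ℕ}

lemma Mgen_succ (k : ℕ) : Mgen m (k + 1) = m k * Mgen m k := rfl

lemma Mgen_pos (hm : ∀ k, 0 < m k) (k : ℕ) : 0 < Mgen m k := by
  induction k with
  | zero => exact Nat.one_pos
  | succ k ih => exact Nat.mul_pos (hm k) ih

lemma Mgen_dvd_Mgen {j k : ℕ} (h : j ≤ k) : Mgen m j ∣ Mgen m k := by
  induction k, h using Nat.le_induction with
  | base => exact dvd_rfl
  | succ k _ ih => exact ih.mul_left (m k)

lemma Mgen_le_Mgen (hm : ∀ k, 0 < m k) {j k : ℕ} (h : j ≤ k) : Mgen m j ≤ Mgen m k :=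
  Nat.le_of_dvd (Mgen_pos hm k) (Mgen_dvd_Mgen h)

lemma lt_Mgen (hm : ∀ k, 2 ≤ m k) (n : ℕ) : n < Mgen m n := by
  induction n with
  | zero => exact Nat.one_pos
  | succ n ih =>
    rw [Mgen_succ]
    nlinarith [hm n]

lemma digit_eq_zero_of_lt {n k : ℕ} (h : n < Mgen m k) : digit m n k = 0 := by
  rw [digit, Nat.div_eq_of_lt h, Nat.zero_mod]

lemma digit_mul_Mgen_add (hm : ∀ k, 0 < m k) {j b : ℕ} (hb : b < Mgen m j) (c k : ℕ) :
    digit m (c * Mgen m j + b) k = digit m (c * Mgen m j) k + digit m b k := by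
  have hMk := Mgen_pos hm k
  rcases lt_or_ge k j with hkj | hjk
  · obtain ⟨t, ht⟩ := Mgen_dvd_Mgen (m := m) hkj
    have hc : c * Mgen m j = Mgen m k * (c * t * m k) := by rw [ht, Mgen_succ]; ring
    simp [digit, hc, Nat.mul_add_div hMk, Nat.mul_div_cancel_left _ hMk]
  · obtain ⟨t, ht⟩ := Mgen_dvd_Mgen (m := m) hjk
    have hMj := Mgen_pos hm j
    rw [digit_eq_zero_of_lt (hb.trans_le (Mgen_le_Mgen hm hjk)), add_zero, digit, digit, ht,
      ← Nat.div_div_eq_div_mul, ← Nat.div_div_eq_div_mul, mul_comm c, Nat.mul_add_div hMj,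
      Nat.div_eq_of_lt hb, add_zero, Nat.mul_div_cancel_left _ hMj]

lemma prod_range_rade_pow_digit_eq (hm : ∀ k, 0 < m k) (x : Gm m) {n K L : ℕ}
    (hK : n < Mgen m K) (hKL : K ≤ L) :
    ∏ k ∈ range K, rade m k x ^ digit m n k = ∏ k ∈ range L, rade m k x ^ digit m n k :=
  prod_subset (range_subset_range.2 hKL) fun k _ hk => by
    rw [digit_eq_zero_of_lt (hK.trans_le (Mgen_le_Mgen hm (by simpa using hk))), pow_zero]

lemma psi_eq_prod_range (hm : ∀ k, 2 ≤ m k) {n K : ℕ} (hK : n < Mgen m K) (x : Gm m) :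
    psi m n x = ∏ k ∈ range K, rade m k x ^ digit m n k := by
  have hm' : ∀ k, 0 < m k := fun k => two_pos.trans_le (hm k)
  have hn : n < Mgen m (n + 1) := (lt_Mgen hm n).trans_le (Mgen_le_Mgen hm' n.le_succ)
  rw [psi, prod_range_rade_pow_digit_eq hm' x hn (le_max_left _ K),
    prod_range_rade_pow_digit_eq hm' x hK (le_max_right (n + 1) K)]

lemma psi_mul_Mgen_add (hm : ∀ k, 2 ≤ m k) {j b : ℕ} (hb : b < Mgen m j) (c : ℕ) (x : Gm m) :
    psi m (c * Mgen m j + b) x = psi m (c * Mgen m j) x * psi m b x := by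
  have hm' : ∀ k, 0 < m k := fun k => two_pos.trans_le (hm k)
  set K := c * Mgen m j + b
  have hK : K < Mgen m K := lt_Mgen hm K
  rw [psi_eq_prod_range hm hK, psi_eq_prod_range hm ((Nat.le_add_right _ b).trans_lt hK),
    psi_eq_prod_range hm ((Nat.le_add_left b _).trans_lt hK), ← prod_mul_distrib]
  exact prod_congr rfl fun k _ => by rw [digit_mul_Mgen_add hm' hb, pow_add]

open Complex in
lemma rade_eq_pow (k : ℕ) (x : Gm m) :
    rade m k x = exp (2 * Real.pi * I / m k) ^ (x k).val := by
  rw [rade, ← exp_nat_mul]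
  ring_nf

lemma norm_rade (k : ℕ) (x : Gm m) : ‖rade m k x‖ = 1 := by
  simp [rade, Complex.norm_exp]

lemma rade_eq_one_of_eq_zero {k : ℕ} {x : Gm m} (h : x k = 0) : rade m k x = 1 := by
  simp [rade, h]

lemma geom_sum_rade_eq_zero {k : ℕ} (hmk : 0 < m k) {x : Gm m} (h : x k ≠ 0) :
    ∑ i ∈ range (m k), rade m k x ^ i = 0 := by
  have : NeZero (m k) := NeZero.of_pos hmk
  have hζ := Complex.isPrimitiveRoot_exp (m k) hmk.ne'
  rw [rade_eq_pow]
  have hne : Complex.exp (2 * Real.pi * Complex.I / m k) ^ (x k).val ≠ 1 := fun h1 => h <| (ZMod.val_eq_zero _).1 <|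
    Nat.eq_zero_of_dvd_of_lt ((hζ.pow_eq_one_iff_dvd _).1 h1) (ZMod.val_lt _)
  rw [geom_sum_eq hne, pow_right_comm, hζ.pow_eq_one, one_pow, sub_self, zero_div]

lemma psi_mul_Mgen_of_mem_cyl (hm : ∀ k, 2 ≤ m k) {s i : ℕ} {y : Gm m} (hy : y ∈ cyl m s 0)
    (hi : i < m s) : psi m (i * Mgen m s) y = rade m s y ^ i := by
  have hMs := Mgen_pos (fun k => two_pos.trans_le (hm k)) s
  rw [psi_eq_prod_range hm (K := s + 1) (by rw [Mgen_succ]; exact Nat.mul_lt_mul_of_pos_right hi hMs),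
    prod_range_succ, prod_eq_one fun k hk => by
      rw [rade_eq_one_of_eq_zero (hy k (mem_range.1 hk)), one_pow],
    one_mul, digit, Nat.mul_div_cancel _ hMs, Nat.mod_eq_of_lt hi]

lemma norm_psi (n : ℕ) (x : Gm m) : ‖psi m n x‖ = 1 := by
  simp [psi, norm_rade]

lemma norm_Dker_le (n : ℕ) (x : Gm m) : ‖Dker m n x‖ ≤ n :=
  (norm_sum_le _ _).trans (by simp [norm_psi])

lemma Dker_mul_Mgen_add (hm : ∀ k, 2 ≤ m k) {j r : ℕ} (hr : r ≤ Mgen m j) (c : ℕ) (x : Gm m) :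
    Dker m (c * Mgen m j + r) x =
      Dker m (c * Mgen m j) x + psi m (c * Mgen m j) x * Dker m r x := by
  rw [Dker, sum_range_add, Dker, Dker, mul_sum]
  exact congrArg _ (sum_congr rfl fun i hi => psi_mul_Mgen_add hm ((mem_range.1 hi).trans_le hr) c x)

lemma Dker_mul_Mgen (hm : ∀ k, 2 ≤ m k) (c j : ℕ) (x : Gm m) :
    Dker m (c * Mgen m j) x = (∑ i ∈ range c, psi m (i * Mgen m j) x) * Dker m (Mgen m j) x := by
  induction c with
  | zero => simp [Dker]
  | succ c ih => rw [Nat.succ_mul, Dker_mul_Mgen_add hm le_rfl, ih, sum_range_succ, add_mul]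

lemma Dker_Mgen_succ_eq_zero (hm : ∀ k, 2 ≤ m k) {s : ℕ} {y : Gm m}
    (hy : y ∈ cyl m s 0 \ cyl m (s + 1) 0) : Dker m (Mgen m (s + 1)) y = 0 := by
  obtain ⟨hys, hys1⟩ := hy
  have hy_s : y s ≠ 0 := fun h =>
    hys1 fun j hj => (Nat.lt_succ_iff_lt_or_eq.1 hj).elim (hys j) fun e => e ▸ h
  rw [Mgen_succ, Dker_mul_Mgen hm, sum_congr rfl fun i hi =>
    psi_mul_Mgen_of_mem_cyl hm hys (mem_range.1 hi),
    geom_sum_rade_eq_zero (two_pos.trans_le (hm s)) hy_s, zero_mul]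

lemma norm_Dker_le_of_mem_cyl_diff (hm : ∀ k, 2 ≤ m k) {s : ℕ} {y : Gm m}
    (hy : y ∈ cyl m s 0 \ cyl m (s + 1) 0) (n : ℕ) : ‖Dker m n y‖ ≤ Mgen m (s + 1) := by
  set M := Mgen m (s + 1)
  have hM : n % M < M := Nat.mod_lt _ (Mgen_pos (fun k => two_pos.trans_le (hm k)) _)
  rw [← Nat.div_add_mod' n M, Dker_mul_Mgen_add hm hM.le, Dker_mul_Mgen hm,
    Dker_Mgen_succ_eq_zero hm hy, mul_zero, zero_add, norm_mul, norm_psi, one_mul]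
  exact (norm_Dker_le _ _).trans (by exact_mod_cast hM.le)

lemma sub_mem_cyl_zero_iff {N k : ℕ} {t : Gm m} (ht : t ∈ cyl m N 0) (hk : k ≤ N) (x : Gm m) :
    x - t ∈ cyl m k 0 ↔ x ∈ cyl m k 0 := by
  refine forall₂_congr fun j hj => ?_
  rw [Pi.sub_apply, ht j (hj.trans_le hk), Pi.zero_apply, sub_zero]

/-- If `s < N` and `x ∈ I_s ∖ I_{s+1}`, then for every `n`,
`∫_{I_N} |D_n(x - t)| dμ(t) ≤ λ M_s / M_N`, where `λ = sup_k m_k`. -/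
theorem dirichlet_kernel_integral_bound
    (m : ℕ → ℕ) (hm : ∀ k, 2 ≤ m k) (lam : ℕ) (hlam : ∀ k, m k ≤ lam)
    (μ : Measure (Gm m)) (hμ : ∀ n x, μ (cyl m n x) = ((Mgen m n : ℝ≥0∞))⁻¹)
    (N s : ℕ) (hs : s < N) (x : Gm m) (hx : x ∈ cyl m s 0 \ cyl m (s + 1) 0) (n : ℕ) :
    (∫ t in cyl m N 0, ‖Dker m n (x - t)‖ ∂μ) ≤
      (lam : ℝ) * Mgen m s / Mgen m N := by
  have hbound : ∀ t ∈ cyl m N 0, ‖‖Dker m n (x - t)‖‖ ≤ Mgen m (s + 1) := fun t ht => by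
    rw [norm_norm]
    exact norm_Dker_le_of_mem_cyl_diff hm ⟨(sub_mem_cyl_zero_iff ht hs.le x).2 hx.1,
      mt (sub_mem_cyl_zero_iff ht hs x).1 hx.2⟩ n
  have hMN : 0 < Mgen m N := Mgen_pos (fun k => two_pos.trans_le (hm k)) N
  have hμN : μ (cyl m N 0) < ⊤ := by rw [hμ]; exact inv_lt_top.2 (by exact_mod_cast hMN)
  calc (∫ t in cyl m N 0, ‖Dker m n (x - t)‖ ∂μ)
      ≤ ‖∫ t in cyl m N 0, ‖Dker m n (x - t)‖ ∂μ‖ := Real.le_norm_self _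
    _ ≤ Mgen m (s + 1) * (μ (cyl m N 0)).toReal := norm_setIntegral_le_of_norm_le_const hμN hbound
    _ ≤ (lam : ℝ) * Mgen m s / Mgen m N := by
      rw [hμ, toReal_inv, toReal_natCast, Mgen_succ, Nat.cast_mul, ← div_eq_mul_inv]
      gcongr
      exact_mod_cast hlam s

end
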